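/- arXiv:math/0101245 — 6 statements merged into one kernel-verified Lean document; each statement's English description precedes it below -/
import Mathlib

section
/- Suppose the eleven known blocks a, b, c, d, e, f, g, h, i, j, k are invertible and that A·B = I and B·A = I. Then z = z·e·z + z·d·g + j·b·z − k·c·i + j·a·g. -/
/-!
Only three block entries of `A * B = 1` and `B * A = 1` are needed: the `(1,3)` and `(3,3)` entries
of `A * B` and the `(3,2)` entry of `B * A`. Writing the right-hand side as
`z (d g + w i + e z) + j (a g + t i + b z) - (j t + k c + z w) i` and substituting `1`, `0`, `0`
for the three bracketed entries leaves `z`; this holds in any ring.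
-/

open Matrix

/-- The 3×3 block matrix `[[m11, m12, m13], [m21, m22, m23], [m31, m32, m33]]`
assembled from n×n blocks. -/
def blk3 {F : Type*} [Field F] {n : ℕ}
    (m11 m12 m13 m21 m22 m23 m31 m32 m33 : Matrix (Fin n) (Fin n) F) :
    Matrix (Fin n ⊕ (Fin n ⊕ Fin n)) (Fin n ⊕ (Fin n ⊕ Fin n)) F :=
  Matrix.fromBlocks m11 (Matrix.fromCols m12 m13) (Matrix.fromRows m21 m31)
    (Matrix.fromBlocks m22 m23 m32 m33)

namespace Matrix

variable {R m m₁ m₂ n n₁ n₂ : Type*} [Add R]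

lemma fromCols_add (A₁ B₁ : Matrix m n₁ R) (A₂ B₂ : Matrix m n₂ R) :
    fromCols A₁ A₂ + fromCols B₁ B₂ = fromCols (A₁ + B₁) (A₂ + B₂) := by
  ext _ (_ | _) <;> rfl

lemma fromRows_add (A₁ B₁ : Matrix m₁ n R) (A₂ B₂ : Matrix m₂ n R) :
    fromRows A₁ A₂ + fromRows B₁ B₂ = fromRows (A₁ + B₁) (A₂ + B₂) := by
  ext (_ | _) _ <;> rfl

end Matrix

section Blk3

variable {F : Type*} [Field F] {n : ℕ}

lemma blk3_mul
    (m11 m12 m13 m21 m22 m23 m31 m32 m33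
      p11 p12 p13 p21 p22 p23 p31 p32 p33 : Matrix (Fin n) (Fin n) F) :
    blk3 m11 m12 m13 m21 m22 m23 m31 m32 m33 * blk3 p11 p12 p13 p21 p22 p23 p31 p32 p33 =
      blk3 (m11 * p11 + m12 * p21 + m13 * p31) (m11 * p12 + m12 * p22 + m13 * p32)
        (m11 * p13 + m12 * p23 + m13 * p33)
        (m21 * p11 + m22 * p21 + m23 * p31) (m21 * p12 + m22 * p22 + m23 * p32)
        (m21 * p13 + m22 * p23 + m23 * p33)
        (m31 * p11 + m32 * p21 + m33 * p31) (m31 * p12 + m32 * p22 + m33 * p32)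
        (m31 * p13 + m32 * p23 + m33 * p33) := by
  simp [blk3, fromBlocks_multiply, fromCols_mul_fromRows, fromRows_mul, mul_fromCols,
    fromCols_mul_fromBlocks, fromBlocks_mul_fromRows, fromCols_add, fromRows_add,
    fromBlocks_add, add_assoc]

lemma blk3_one : blk3 (1 : Matrix (Fin n) (Fin n) F) 0 0 0 1 0 0 0 1 = 1 := by
  simp [blk3, fromBlocks_one]

lemma blk3_eq_blk3_iff
    {m11 m12 m13 m21 m22 m23 m31 m32 m33
      p11 p12 p13 p21 p22 p23 p31 p32 p33 : Matrix (Fin n) (Fin n) F} :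
    blk3 m11 m12 m13 m21 m22 m23 m31 m32 m33 = blk3 p11 p12 p13 p21 p22 p23 p31 p32 p33 ↔
      m11 = p11 ∧ m12 = p12 ∧ m13 = p13 ∧ m21 = p21 ∧ m22 = p22 ∧ m23 = p23 ∧
        m31 = p31 ∧ m32 = p32 ∧ m33 = p33 := by
  simp only [blk3, fromBlocks_inj, fromCols_ext_iff, fromRows_ext_iff, and_assoc]
  tauto

end Blk3

lemma eq_of_corner_block_relations {R : Type*} [Ring R] {a b c d e g i j k t w z : R}
    (h13 : a * g + t * i + b * z = 0) (h33 : d * g + w * i + e * z = 1)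
    (h32 : j * t + k * c + z * w = 0) :
    z = z * e * z + z * d * g + j * b * z - k * c * i + j * a * g := calc
  z = z * (d * g + w * i + e * z) + j * (a * g + t * i + b * z) - (j * t + k * c + z * w) * i := by
    rw [h13, h33, h32]; noncomm_ring
  _ = z * e * z + z * d * g + j * b * z - k * c * i + j * a * g := by noncomm_ring

theorem stmt_3_general {F : Type*} [Field F] {n : ℕ}
    (a b c d e f g h i j k : Matrix (Fin n) (Fin n) F)
    (t u v w x y z : Matrix (Fin n) (Fin n) F)
    (hAB : blk3 a t b u c v d w e * blk3 x f g h y i j k z = 1)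
    (hBA : blk3 x f g h y i j k z * blk3 a t b u c v d w e = 1) :
    z = z * e * z + z * d * g + j * b * z - k * c * i + j * a * g := by
  rw [blk3_mul, ← blk3_one, blk3_eq_blk3_iff] at hAB hBA
  obtain ⟨-, -, h13, -, -, -, -, -, h33⟩ := hAB
  obtain ⟨-, -, -, -, -, -, -, h32, -⟩ := hBA
  exact eq_of_corner_block_relations h13 h33 h32

theorem stmt_3 {F : Type*} [Field F] {n : ℕ} (hn : 0 < n)
    (a b c d e f g h i j k : Matrix (Fin n) (Fin n) F)
    (ha : IsUnit a) (hb : IsUnit b) (hc : IsUnit c) (hd : IsUnit d) (he : IsUnit e)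
    (hf : IsUnit f) (hg : IsUnit g) (hh : IsUnit h) (hi : IsUnit i) (hj : IsUnit j)
    (hk : IsUnit k)
    (t u v w x y z : Matrix (Fin n) (Fin n) F)
    (hAB : blk3 a t b u c v d w e * blk3 x f g h y i j k z = 1)
    (hBA : blk3 x f g h y i j k z * blk3 a t b u c v d w e = 1) :
    z = z * e * z + z * d * g + j * b * z - k * c * i + j * a * g :=
  stmt_3_general a b c d e f g h i j k t u v w x y z hAB hBA
end

section
/- Suppose the eleven known blocks a, b, c, d, e, f, g, h, i, j, k are invertible and that A·B = I and B·A = I. Then f⁻¹·a⁻¹ − f⁻¹·g·d·a⁻¹ + k⁻¹·z·d·a⁻¹ = −k⁻¹·b⁻¹ − f⁻¹·g·e·b⁻¹ + k⁻¹·z·e·b⁻¹. -/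
/-!
Only the first and third rows of `B·A = I`, read against the first and third columns of `A`, are
needed. Cancelling `a`, `b` on the right and `f`, `k` on the left in these four block equations
shows that both sides of the identity equal `f⁻¹·x − k⁻¹·j`.
-/

open Matrix

section Ring

variable {R : Type*} [Ring R]

theorem mul_mul_eq_of_mul_add_mul_add_eq {p q r s s' l l' c : R}
    (hl : l' * l = 1) (hs : s * s' = 1) (h : p * s + l * q + r = c) :
    l' * r * s' = l' * c * s' - l' * p - q * s' :=
  calc l' * r * s' = l' * (p * s + l * q + r) * s' - l' * p * (s * s') - l' * l * q * s' := by
        noncomm_ring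
    _ = l' * c * s' - l' * p - q * s' := by rw [h, hs, hl]; noncomm_ring

theorem identity_of_corner_block_equations {a a' b b' f f' k k' g j x z u v d e : R}
    (ha : a * a' = 1) (hb : b * b' = 1) (hf : f' * f = 1) (hk : k' * k = 1)
    (h11 : x * a + f * u + g * d = 1) (h13 : x * b + f * v + g * e = 0)
    (h31 : j * a + k * u + z * d = 0) (h33 : j * b + k * v + z * e = 1) :
    f' * a' - f' * g * d * a' + k' * z * d * a' =
      -(k' * b') - f' * g * e * b' + k' * z * e * b' := by
  have e11 := mul_mul_eq_of_mul_add_mul_add_eq hf ha h11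
  have e13 := mul_mul_eq_of_mul_add_mul_add_eq hf hb h13
  have e31 := mul_mul_eq_of_mul_add_mul_add_eq hk ha h31
  have e33 := mul_mul_eq_of_mul_add_mul_add_eq hk hb h33
  linear_combination (norm := noncomm_ring) -e11 + e31 + e13 - e33

end Ring

section Blk3

variable {F : Type*} [Field F] {n : ℕ}

theorem blk3_mul_s5 (a11 a12 a13 a21 a22 a23 a31 a32 a33
    b11 b12 b13 b21 b22 b23 b31 b32 b33 : Matrix (Fin n) (Fin n) F) :
    blk3 a11 a12 a13 a21 a22 a23 a31 a32 a33 * blk3 b11 b12 b13 b21 b22 b23 b31 b32 b33 =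
      blk3 (a11 * b11 + a12 * b21 + a13 * b31) (a11 * b12 + a12 * b22 + a13 * b32)
        (a11 * b13 + a12 * b23 + a13 * b33) (a21 * b11 + a22 * b21 + a23 * b31)
        (a21 * b12 + a22 * b22 + a23 * b32) (a21 * b13 + a22 * b23 + a23 * b33)
        (a31 * b11 + a32 * b21 + a33 * b31) (a31 * b12 + a32 * b22 + a33 * b32)
        (a31 * b13 + a32 * b23 + a33 * b33) := by
  ext (i | i | i) (j | j | j) <;>
    simp [blk3, mul_apply, Fintype.sum_sum_type] <;> ring

theorem one_eq_blk3 :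
    (1 : Matrix (Fin n ⊕ (Fin n ⊕ Fin n)) (Fin n ⊕ (Fin n ⊕ Fin n)) F) =
      blk3 1 0 0 0 1 0 0 0 1 := by
  simp only [blk3, fromCols_zero, fromRows_zero, fromBlocks_one]

theorem blk3_inj {a11 a12 a13 a21 a22 a23 a31 a32 a33
    b11 b12 b13 b21 b22 b23 b31 b32 b33 : Matrix (Fin n) (Fin n) F} :
    blk3 a11 a12 a13 a21 a22 a23 a31 a32 a33 = blk3 b11 b12 b13 b21 b22 b23 b31 b32 b33 ↔
      a11 = b11 ∧ a12 = b12 ∧ a13 = b13 ∧ a21 = b21 ∧ a22 = b22 ∧ a23 = b23 ∧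
        a31 = b31 ∧ a32 = b32 ∧ a33 = b33 := by
  simp only [blk3, fromBlocks_inj, fromCols_ext_iff, fromRows_ext_iff, and_assoc]
  tauto

end Blk3

theorem stmt_5_general {F : Type*} [Field F] {n : ℕ}
    (a b c d e f g h i j k : Matrix (Fin n) (Fin n) F)
    (ha : IsUnit a) (hb : IsUnit b) (hf : IsUnit f) (hk : IsUnit k)
    (t u v w x y z : Matrix (Fin n) (Fin n) F)
    (hBA : blk3 x f g h y i j k z * blk3 a t b u c v d w e = 1) :
    f⁻¹ * a⁻¹ - f⁻¹ * g * d * a⁻¹ + k⁻¹ * z * d * a⁻¹ =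
      -(k⁻¹ * b⁻¹) - f⁻¹ * g * e * b⁻¹ + k⁻¹ * z * e * b⁻¹ := by
  rw [blk3_mul_s5, one_eq_blk3, blk3_inj] at hBA
  obtain ⟨h11, -, h13, -, -, -, h31, -, h33⟩ := hBA
  exact identity_of_corner_block_equations
    (mul_nonsing_inv a (isUnit_iff_isUnit_det a |>.mp ha))
    (mul_nonsing_inv b (isUnit_iff_isUnit_det b |>.mp hb))
    (nonsing_inv_mul f (isUnit_iff_isUnit_det f |>.mp hf))
    (nonsing_inv_mul k (isUnit_iff_isUnit_det k |>.mp hk)) h11 h13 h31 h33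

theorem stmt_5 {F : Type*} [Field F] {n : ℕ} (hn : 0 < n)
    (a b c d e f g h i j k : Matrix (Fin n) (Fin n) F)
    (ha : IsUnit a) (hb : IsUnit b) (hc : IsUnit c) (hd : IsUnit d) (he : IsUnit e)
    (hf : IsUnit f) (hg : IsUnit g) (hh : IsUnit h) (hi : IsUnit i) (hj : IsUnit j)
    (hk : IsUnit k)
    (t u v w x y z : Matrix (Fin n) (Fin n) F)
    (hAB : blk3 a t b u c v d w e * blk3 x f g h y i j k z = 1)
    (hBA : blk3 x f g h y i j k z * blk3 a t b u c v d w e = 1) :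
    f⁻¹ * a⁻¹ - f⁻¹ * g * d * a⁻¹ + k⁻¹ * z * d * a⁻¹ =
      -(k⁻¹ * b⁻¹) - f⁻¹ * g * e * b⁻¹ + k⁻¹ * z * e * b⁻¹ :=
  stmt_5_general a b c d e f g h i j k ha hb hf hk t u v w x y z hBA
end

section
/- Suppose the eleven known blocks a, b, c, d, e, f, g, h, i, j, k are invertible and that A·B = I and B·A = I. Then u = −k⁻¹·j·a − k⁻¹·z·d. -/
open Matrix

/-! The (3,1) block of `B·A = I` reads `j a + k u + z d = 0`; solve it for `u` by inverting `k`. -/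

theorem toRows₂_toBlocks₂₁_one {α l m m' : Type*} [Zero α] [One α]
    [DecidableEq l] [DecidableEq m] [DecidableEq m'] :
    (1 : Matrix (l ⊕ (m ⊕ m')) (l ⊕ (m ⊕ m')) α).toBlocks₂₁.toRows₂ = 0 := by
  rw [← fromBlocks_one, toBlocks_fromBlocks₂₁]
  rfl

theorem toRows₂_toBlocks₂₁_blk3_mul_blk3 {F : Type*} [Field F] {n : ℕ}
    (m11 m12 m13 m21 m22 m23 m31 m32 m33 : Matrix (Fin n) (Fin n) F)
    (p11 p12 p13 p21 p22 p23 p31 p32 p33 : Matrix (Fin n) (Fin n) F) :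
    (blk3 m11 m12 m13 m21 m22 m23 m31 m32 m33 *
        blk3 p11 p12 p13 p21 p22 p23 p31 p32 p33).toBlocks₂₁.toRows₂ =
      m31 * p11 + m32 * p21 + m33 * p31 := by
  rw [blk3, blk3, fromBlocks_multiply, toBlocks_fromBlocks₂₁, fromRows_mul,
    fromBlocks_mul_fromRows]
  ext p q
  simp only [toRows₂_apply, Matrix.add_apply, fromRows_apply_inr, add_assoc]

theorem eq_neg_inv_mul_sub_inv_mul_of_add_mul_add_eq_zero {R ι : Type*} [CommRing R]
    [Fintype ι] [DecidableEq ι] {p k u r : Matrix ι ι R} (hk : IsUnit k)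
    (h : p + k * u + r = 0) :
    u = -(k⁻¹ * p) - k⁻¹ * r := by
  have := hk.invertible
  have hku : k * u = -p - r := by linear_combination (norm := noncomm_ring) h
  calc u = k⁻¹ * (k * u) := (inv_mul_cancel_left_of_invertible k u).symm
    _ = -(k⁻¹ * p) - k⁻¹ * r := by rw [hku]; noncomm_ring

theorem stmt_7_general {F : Type*} [Field F] {n : ℕ}
    (a b c d e f g h i j k : Matrix (Fin n) (Fin n) F)
    (hk : IsUnit k)
    (t u v w x y z : Matrix (Fin n) (Fin n) F)
    (hBA : blk3 x f g h y i j k z * blk3 a t b u c v d w e = 1) :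
    u = -(k⁻¹ * j * a) - k⁻¹ * z * d := by
  have hblock : j * a + k * u + z * d = 0 := by
    rw [← toRows₂_toBlocks₂₁_blk3_mul_blk3, hBA, toRows₂_toBlocks₂₁_one]
  simpa only [Matrix.mul_assoc] using
    eq_neg_inv_mul_sub_inv_mul_of_add_mul_add_eq_zero hk hblock

theorem stmt_7 {F : Type*} [Field F] {n : ℕ} (hn : 0 < n)
    (a b c d e f g h i j k : Matrix (Fin n) (Fin n) F)
    (ha : IsUnit a) (hb : IsUnit b) (hc : IsUnit c) (hd : IsUnit d) (he : IsUnit e)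
    (hf : IsUnit f) (hg : IsUnit g) (hh : IsUnit h) (hi : IsUnit i) (hj : IsUnit j)
    (hk : IsUnit k)
    (t u v w x y z : Matrix (Fin n) (Fin n) F)
    (hAB : blk3 a t b u c v d w e * blk3 x f g h y i j k z = 1)
    (hBA : blk3 x f g h y i j k z * blk3 a t b u c v d w e = 1) :
    u = -(k⁻¹ * j * a) - k⁻¹ * z * d :=
  stmt_7_general a b c d e f g h i j k hk t u v w x y z hBA
end

section
/- Suppose the eleven known blocks a, b, c, d, e, f, g, h, i, j, k are invertible and that A·B = I and B·A = I. Then v = k⁻¹ − k⁻¹·j·b − k⁻¹·z·e. -/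
open Matrix

theorem toBlocks₂₂_toBlocks₂₂_blk3_mul_blk3 {F : Type*} [Field F] {n : ℕ}
    (m11 m12 m13 m21 m22 m23 m31 m32 m33 p11 p12 p13 p21 p22 p23 p31 p32 p33 :
      Matrix (Fin n) (Fin n) F) :
    (blk3 m11 m12 m13 m21 m22 m23 m31 m32 m33 *
        blk3 p11 p12 p13 p21 p22 p23 p31 p32 p33).toBlocks₂₂.toBlocks₂₂ =
      m31 * p13 + m32 * p23 + m33 * p33 := by
  simp only [blk3, fromBlocks_multiply, toBlocks_fromBlocks₂₂, fromRows_mul_fromCols,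
    fromBlocks_add]
  ext
  simp [add_assoc]

theorem stmt_8_general {F : Type*} [Field F] {n : ℕ}
    (a b c d e f g h i j k : Matrix (Fin n) (Fin n) F)
    (hk : IsUnit k)
    (t u v w x y z : Matrix (Fin n) (Fin n) F)
    (hBA : blk3 x f g h y i j k z * blk3 a t b u c v d w e = 1) :
    v = k⁻¹ - k⁻¹ * j * b - k⁻¹ * z * e := by
  have hkv : j * b + k * v + z * e = 1 := by
    simpa only [toBlocks₂₂_toBlocks₂₂_blk3_mul_blk3, ← fromBlocks_one, toBlocks_fromBlocks₂₂]
      using congrArg (fun M => M.toBlocks₂₂.toBlocks₂₂) hBA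
  have hdet : IsUnit k.det := (isUnit_iff_isUnit_det k).mp hk
  calc v = k⁻¹ * (k * v) := (nonsing_inv_mul_cancel_left k v hdet).symm
    _ = k⁻¹ * (1 - j * b - z * e) := by rw [← hkv]; noncomm_ring
    _ = k⁻¹ - k⁻¹ * j * b - k⁻¹ * z * e := by noncomm_ring

theorem stmt_8 {F : Type*} [Field F] {n : ℕ} (hn : 0 < n)
    (a b c d e f g h i j k : Matrix (Fin n) (Fin n) F)
    (ha : IsUnit a) (hb : IsUnit b) (hc : IsUnit c) (hd : IsUnit d) (he : IsUnit e)
    (hf : IsUnit f) (hg : IsUnit g) (hh : IsUnit h) (hi : IsUnit i) (hj : IsUnit j)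
    (hk : IsUnit k)
    (t u v w x y z : Matrix (Fin n) (Fin n) F)
    (hAB : blk3 a t b u c v d w e * blk3 x f g h y i j k z = 1)
    (hBA : blk3 x f g h y i j k z * blk3 a t b u c v d w e = 1) :
    v = k⁻¹ - k⁻¹ * j * b - k⁻¹ * z * e :=
  stmt_8_general a b c d e f g h i j k hk t u v w x y z hBA
end

section
/- Suppose the eleven known blocks a, b, c, d, e, f, g, h, i, j, k are invertible and that A·B = I and B·A = I. Then y = c⁻¹·k⁻¹·j·a·f + c⁻¹·k⁻¹·j·b·k + c⁻¹·k⁻¹·z·d·f + c⁻¹·k⁻¹·z·e·k. -/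
/-!
The `(2,2)` block of `A·B = I` gives `u f + c y + v k = 1`, and the `(3,1)` and `(3,3)` blocks of
`B·A = I` give `j a + k u + z d = 0` and `j b + k v + z e = 1`. Multiplying the last two on the
right by `f` and `k` and adding shows `k⁻¹ (j a f + j b k + z d f + z e k) = 1 - u f - v k = c y`.
-/

open Matrix

section BlockMatrix

variable {F : Type*} [Field F] {n : ℕ}

lemma blk3_mul_s11 (a t b u c v d w e x f g h y i j k z : Matrix (Fin n) (Fin n) F) :
    blk3 a t b u c v d w e * blk3 x f g h y i j k z =
      blk3 (a * x + t * h + b * j) (a * f + t * y + b * k) (a * g + t * i + b * z)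
        (u * x + c * h + v * j) (u * f + c * y + v * k) (u * g + c * i + v * z)
        (d * x + w * h + e * j) (d * f + w * y + e * k) (d * g + w * i + e * z) := by
  ext (r | r | r) (s | s | s) <;>
    simp [blk3, Matrix.mul_apply, Fintype.sum_sum_type, add_assoc]

lemma blk3_eq_one_iff {m11 m12 m13 m21 m22 m23 m31 m32 m33 : Matrix (Fin n) (Fin n) F} :
    blk3 m11 m12 m13 m21 m22 m23 m31 m32 m33 = 1 ↔
      m11 = 1 ∧ m12 = 0 ∧ m13 = 0 ∧ m21 = 0 ∧ m22 = 1 ∧ m23 = 0 ∧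
        m31 = 0 ∧ m32 = 0 ∧ m33 = 1 := by
  rw [← fromBlocks_one, ← fromBlocks_one, ← fromCols_zero, ← fromRows_zero, blk3]
  simp only [fromBlocks_inj, fromCols_ext_iff, fromRows_ext_iff]
  tauto

end BlockMatrix

lemma eq_of_block_inverse_relations {R : Type*} [Ring R] {a b c d e f j k u v y z c' k' : R}
    (hc : c' * c = 1) (hk : k' * k = 1)
    (h22 : u * f + c * y + v * k = 1) (h31 : j * a + k * u + z * d = 0)
    (h33 : j * b + k * v + z * e = 1) :
    y = c' * k' * j * a * f + c' * k' * j * b * k + c' * k' * z * d * f + c' * k' * z * e * k := by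
  have hy : y = c' * (1 - u * f - v * k) := by
    linear_combination (norm := noncomm_ring) c' * h22 - hc * y
  have hrow : k' * (j * a * f + j * b * k + z * d * f + z * e * k) = 1 - u * f - v * k := by
    linear_combination (norm := noncomm_ring)
      k' * h31 * f + k' * h33 * k - hk * u * f - hk * v * k + hk
  rw [hy, ← hrow]
  noncomm_ring

theorem stmt_11_general {F : Type*} [Field F] {n : ℕ}
    (a b c d e f g h i j k : Matrix (Fin n) (Fin n) F)
    (hc : IsUnit c) (hk : IsUnit k)
    (t u v w x y z : Matrix (Fin n) (Fin n) F)
    (hAB : blk3 a t b u c v d w e * blk3 x f g h y i j k z = 1)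
    (hBA : blk3 x f g h y i j k z * blk3 a t b u c v d w e = 1) :
    y = c⁻¹ * k⁻¹ * j * a * f + c⁻¹ * k⁻¹ * j * b * k +
      c⁻¹ * k⁻¹ * z * d * f + c⁻¹ * k⁻¹ * z * e * k := by
  rw [blk3_mul_s11, blk3_eq_one_iff] at hAB hBA
  obtain ⟨-, -, -, -, h22, -⟩ := hAB
  obtain ⟨-, -, -, -, -, -, h31, -, h33⟩ := hBA
  exact eq_of_block_inverse_relations (nonsing_inv_mul c ((isUnit_iff_isUnit_det c).mp hc))
    (nonsing_inv_mul k ((isUnit_iff_isUnit_det k).mp hk)) h22 h31 h33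

theorem stmt_11 {F : Type*} [Field F] {n : ℕ} (hn : 0 < n)
    (a b c d e f g h i j k : Matrix (Fin n) (Fin n) F)
    (ha : IsUnit a) (hb : IsUnit b) (hc : IsUnit c) (hd : IsUnit d) (he : IsUnit e)
    (hf : IsUnit f) (hg : IsUnit g) (hh : IsUnit h) (hi : IsUnit i) (hj : IsUnit j)
    (hk : IsUnit k)
    (t u v w x y z : Matrix (Fin n) (Fin n) F)
    (hAB : blk3 a t b u c v d w e * blk3 x f g h y i j k z = 1)
    (hBA : blk3 x f g h y i j k z * blk3 a t b u c v d w e = 1) :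
    y = c⁻¹ * k⁻¹ * j * a * f + c⁻¹ * k⁻¹ * j * b * k +
      c⁻¹ * k⁻¹ * z * d * f + c⁻¹ * k⁻¹ * z * e * k :=
  stmt_11_general a b c d e f g h i j k hc hk t u v w x y z hAB hBA
end

section
/- Suppose the eleven known blocks a, b, c, d, e, f, g, h, i, j, k are invertible and the blocks t, u, v, w, x, y, z satisfy the nine relations: z = z·e·z + z·d·g + j·b·z − k·c·i + j·a·g; a⁻¹·h⁻¹ − a⁻¹·b·j·h⁻¹ + a⁻¹·b·z·i⁻¹ = −d⁻¹·i⁻¹ − d⁻¹·e·j·h⁻¹ + d⁻¹·e·z·i⁻¹; f⁻¹·a⁻¹ − f⁻¹·g·d·a⁻¹ + k⁻¹·z·d·a⁻¹ = −k⁻¹·b⁻¹ − f⁻¹·g·e·b⁻¹ + k⁻¹·z·e·b⁻¹; t = −a·g·i⁻¹ − b·z·i⁻¹; u = −k⁻¹·j·a − k⁻¹·z·d; v = k⁻¹ − k⁻¹·j·b − k⁻¹·z·e; w = i⁻¹ − d·g·i⁻¹ − e·z·i⁻¹; x = a⁻¹ + f·k⁻¹·j − g·d·a⁻¹ + f·k⁻¹·z·d·a⁻¹;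 y = c⁻¹·k⁻¹·j·a·f + c⁻¹·k⁻¹·j·b·k + c⁻¹·k⁻¹·z·d·f + c⁻¹·k⁻¹·z·e·k. Then A·B = I and B·A = I. -/
/-
Write `A`, `B` for the two block matrices, `P = A * B`, `Q = B * A`, and index entries from 0.
The formulas for `t`, `w`, `u`, `v` together with the quadratic relation say that the last column
of `P` and the last row of `Q` are those of the identity; the formula for `x` says `Q₀₀ = 1`, the
one for `y` says `P₁₁ = 1`, the second linear relation is `f⁻¹ Q₀₂ b⁻¹ = 0`, and the first one
is `P₂₀ = d a⁻¹ (P₀₀ - 1)`. Comparing entries of `B * P = Q * B`, the invertibility of `i` forces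
`Q₀₁ = 0`, and that of `a` and `k` forces `P₀₀ = 1` and `P₁₀ = 0`. Then the middle rows of
`A * Q = P * A` give `c (Q₁ⱼ - δ₁ⱼ) = 0`, so `Q = 1`, and `P = 1` because square matrices over a
field form a Dedekind-finite ring.
-/

open Matrix

open scoped Ring

namespace Matrix

variable {ι R : Type*} [Fintype ι] [Ring R]

theorem apply_eq_zero_of_mul_apply_eq_zero_right {X Y : Matrix ι ι R} {i j : ι} (m : ι)
    (h : (X * Y) i j = 0) (hY : ∀ k ≠ m, Y k j = 0) (hX : IsUnit (X i m)) : Y m j = 0 := by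
  rw [mul_apply, Finset.sum_eq_single m (fun k _ hk => by rw [hY k hk, mul_zero])
    (by simp)] at h
  exact hX.mul_right_eq_zero.mp h

theorem apply_eq_zero_of_mul_apply_eq_zero_left {X Y : Matrix ι ι R} {i j : ι} (m : ι)
    (h : (X * Y) i j = 0) (hX : ∀ k ≠ m, X i k = 0) (hY : IsUnit (Y m j)) : X i m = 0 := by
  rw [mul_apply, Finset.sum_eq_single m (fun k _ hk => by rw [hX k hk, zero_mul])
    (by simp)] at h
  exact hY.mul_left_eq_zero.mp h

variable [DecidableEq ι]

theorem mul_eq_one_of_rows {A B : Matrix ι ι R} {i : ι} (m : ι)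
    (hrows : ∀ k ≠ m, (B * A) k = (1 : Matrix ι ι R) k)
    (hrow : (A * B) i = (1 : Matrix ι ι R) i) (hA : IsUnit (A i m)) :
    B * A = 1 := by
  have hE : A * (B * A - 1) = (A * B - 1) * A := by noncomm_ring
  rw [← sub_eq_zero]
  ext k j
  have hE_row : ∀ k ≠ m, (B * A - 1) k j = 0 := fun k hk => by
    rw [sub_apply, hrows k hk, sub_self]
  by_cases hk : k = m
  · subst hk
    refine apply_eq_zero_of_mul_apply_eq_zero_right k ?_ hE_row hA
    rw [hE, mul_apply]
    simp [hrow]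
  · exact hE_row k hk

theorem mul_apply_eq_one_apply_of_col {A B : Matrix ι ι R} {i l : ι} (m : ι)
    (hcol : ∀ k, (A * B) k l = (1 : Matrix ι ι R) k l)
    (hrow : ∀ k ≠ m, (B * A) i k = (1 : Matrix ι ι R) i k) (hB : IsUnit (B m l)) :
    (B * A) i m = (1 : Matrix ι ι R) i m := by
  have hE : (B * A - 1) * B = B * (A * B - 1) := by noncomm_ring
  rw [← sub_eq_zero, ← sub_apply]
  refine apply_eq_zero_of_mul_apply_eq_zero_left m (j := l) ?_ ?_ hB
  · rw [hE, mul_apply]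
    simp [hcol]
  · intro k hk
    rw [sub_apply, hrow k hk, sub_self]

theorem mul_apply_one_zero_eq_zero {A B : Matrix (Fin 3) (Fin 3) R}
    (hQ₀ : (B * A) 0 = (1 : Matrix (Fin 3) (Fin 3) R) 0)
    (hQ₂ : (B * A) 2 = (1 : Matrix (Fin 3) (Fin 3) R) 2)
    (hP : (A * B) 2 0 = A 2 0 * (A 0 0)⁻¹ʳ * ((A * B) 0 0 - 1))
    (hA : IsUnit (A 0 0)) (hB : IsUnit (B 2 1)) :
    (A * B) 1 0 = 0 := by
  have col_zero (r : Fin 3) (hr : (B * A) r = (1 : Matrix (Fin 3) (Fin 3) R) r) :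
      (B r 0 + B r 2 * A 2 0 * (A 0 0)⁻¹ʳ) * ((A * B) 0 0 - 1) + B r 1 * (A * B) 1 0 = 0 := by
    have h : (B * A * B) r 0 = (B * (A * B)) r 0 := by rw [Matrix.mul_assoc]
    rw [mul_apply, hr, ← mul_apply, Matrix.one_mul, mul_apply, Fin.sum_univ_three, hP] at h
    linear_combination (norm := noncomm_ring) -h
  have q₀ := congrFun hQ₀ 0
  have q₂ := congrFun hQ₂ 0
  simp only [mul_apply, Fin.sum_univ_three, one_apply_eq,
    one_apply_ne (by decide : (2 : Fin 3) ≠ 0)] at q₀ q₂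
  -- Eliminate `(A * B) 1 0` between rows 0 and 2; the coefficient left over is a left inverse
  -- of `A 0 0`.
  have hX : (B 0 0 + B 0 2 * A 2 0 * (A 0 0)⁻¹ʳ
      - B 0 1 * (B 2 1)⁻¹ʳ * (B 2 0 + B 2 2 * A 2 0 * (A 0 0)⁻¹ʳ)) * A 0 0 = 1 := by
    linear_combination (norm := noncomm_ring [Ring.inverse_mul_cancel _ hA,
      Ring.inverse_mul_cancel_left _ _ hB]) q₀ - B 0 1 * (B 2 1)⁻¹ʳ * q₂
  have hXm : (B 0 0 + B 0 2 * A 2 0 * (A 0 0)⁻¹ʳ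
      - B 0 1 * (B 2 1)⁻¹ʳ * (B 2 0 + B 2 2 * A 2 0 * (A 0 0)⁻¹ʳ)) * ((A * B) 0 0 - 1) = 0 := by
    linear_combination (norm := noncomm_ring [Ring.inverse_mul_cancel_left _ _ hB])
      col_zero 0 hQ₀ - B 0 1 * (B 2 1)⁻¹ʳ * col_zero 2 hQ₂
  have hm : (A * B) 0 0 - 1 = 0 := by
    linear_combination (norm := noncomm_ring [Ring.mul_inverse_cancel _ hA,
      Ring.mul_inverse_cancel_left _ _ hA])
      A 0 0 * hXm - A 0 0 * hX * (A 0 0)⁻¹ʳ * ((A * B) 0 0 - 1)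
  simpa [hm, hB.mul_right_eq_zero] using col_zero 2 hQ₂

end Matrix

section Relations

variable {R : Type*} [Ring R] {a b c d e f g h i j k t u v w x y z : R}

theorem mul_col_two_and_row_two_eq_one (hi : IsUnit i) (hk : IsUnit k)
    (hquad : z = z * e * z + z * d * g + j * b * z - k * c * i + j * a * g)
    (ht : t = -(a * g * i⁻¹ʳ) - b * z * i⁻¹ʳ)
    (hu : u = -(k⁻¹ʳ * j * a) - k⁻¹ʳ * z * d)
    (hv : v = k⁻¹ʳ - k⁻¹ʳ * j * b - k⁻¹ʳ * z * e)
    (hw : w = i⁻¹ʳ - d * g * i⁻¹ʳ - e * z * i⁻¹ʳ) :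
    (∀ r, (!![a, t, b; u, c, v; d, w, e] * !![x, f, g; h, y, i; j, k, z]) r 2 =
      (1 : Matrix (Fin 3) (Fin 3) R) r 2) ∧
    (!![x, f, g; h, y, i; j, k, z] * !![a, t, b; u, c, v; d, w, e]) 2 =
      (1 : Matrix (Fin 3) (Fin 3) R) 2 := by
  have P02 : a * g + t * i + b * z = 0 := by
    rw [ht]; noncomm_ring [Ring.inverse_mul_cancel i hi]
  have P12 : u * g + c * i + v * z = 0 := by
    rw [hu, hv]
    linear_combination (norm := noncomm_ring [Ring.inverse_mul_cancel_left k _ hk])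
      k⁻¹ʳ * hquad
  have P22 : d * g + w * i + e * z = 1 := by
    rw [hw]; noncomm_ring [Ring.inverse_mul_cancel i hi]
  have Q20 : j * a + k * u + z * d = 0 := by
    rw [hu]; noncomm_ring [Ring.mul_inverse_cancel_left k _ hk]
  have Q21 : j * t + k * c + z * w = 0 := by
    rw [ht, hw]
    linear_combination (norm := noncomm_ring [Ring.mul_inverse_cancel i hi]) hquad * i⁻¹ʳ
  have Q22 : j * b + k * v + z * e = 1 := by
    rw [hv]; noncomm_ring [Ring.mul_inverse_cancel k hk, Ring.mul_inverse_cancel_left k _ hk]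
  refine ⟨fun r => ?_, funext fun r => ?_⟩ <;>
    fin_cases r <;> simp [mul_apply, Fin.sum_univ_three, one_apply, P02, P12, P22, Q20, Q21, Q22]

theorem mul_eq_one_of_relations (ha : IsUnit a) (hb : IsUnit b) (hc : IsUnit c)
    (hd : IsUnit d) (hf : IsUnit f) (hh : IsUnit h) (hi : IsUnit i) (hk : IsUnit k)
    (hquad : z = z * e * z + z * d * g + j * b * z - k * c * i + j * a * g)
    (hlin1 : a⁻¹ʳ * h⁻¹ʳ - a⁻¹ʳ * b * j * h⁻¹ʳ + a⁻¹ʳ * b * z * i⁻¹ʳ =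
      -(d⁻¹ʳ * i⁻¹ʳ) - d⁻¹ʳ * e * j * h⁻¹ʳ + d⁻¹ʳ * e * z * i⁻¹ʳ)
    (hlin2 : f⁻¹ʳ * a⁻¹ʳ - f⁻¹ʳ * g * d * a⁻¹ʳ + k⁻¹ʳ * z * d * a⁻¹ʳ =
      -(k⁻¹ʳ * b⁻¹ʳ) - f⁻¹ʳ * g * e * b⁻¹ʳ + k⁻¹ʳ * z * e * b⁻¹ʳ)
    (ht : t = -(a * g * i⁻¹ʳ) - b * z * i⁻¹ʳ)
    (hu : u = -(k⁻¹ʳ * j * a) - k⁻¹ʳ * z * d)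
    (hv : v = k⁻¹ʳ - k⁻¹ʳ * j * b - k⁻¹ʳ * z * e)
    (hw : w = i⁻¹ʳ - d * g * i⁻¹ʳ - e * z * i⁻¹ʳ)
    (hx : x = a⁻¹ʳ + f * k⁻¹ʳ * j - g * d * a⁻¹ʳ + f * k⁻¹ʳ * z * d * a⁻¹ʳ)
    (hy : y = c⁻¹ʳ * k⁻¹ʳ * j * a * f + c⁻¹ʳ * k⁻¹ʳ * j * b * k +
      c⁻¹ʳ * k⁻¹ʳ * z * d * f + c⁻¹ʳ * k⁻¹ʳ * z * e * k) :
    !![x, f, g; h, y, i; j, k, z] * !![a, t, b; u, c, v; d, w, e] = 1 := by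
  obtain ⟨hP_col₂, hQ₂⟩ := mul_col_two_and_row_two_eq_one (x := x) (y := y) hi hk hquad ht hu hv hw
  set A := !![a, t, b; u, c, v; d, w, e]
  set B := !![x, f, g; h, y, i; j, k, z]
  have Q00 : x * a + f * u + g * d = 1 := by
    rw [hx, hu]; noncomm_ring [Ring.inverse_mul_cancel a ha]
  have Q02 : x * b + f * v + g * e = 0 := by
    rw [hx, hv]
    linear_combination (norm := noncomm_ring [Ring.mul_inverse_cancel_left f _ hf,
      Ring.inverse_mul_cancel b hb]) f * hlin2 * b
  have Q01 : x * t + f * c + g * w = 0 := by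
    simpa [A, B, mul_apply, Fin.sum_univ_three] using
      mul_apply_eq_one_apply_of_col (i := 0) 1 hP_col₂
        (fun r hr => by
          fin_cases r <;> simp [A, B, mul_apply, Fin.sum_univ_three, one_apply, Q00, Q02] at hr ⊢)
        (by simpa [B] using hi)
  have hQ₀ : (B * A) 0 = (1 : Matrix (Fin 3) (Fin 3) R) 0 := by
    funext r; fin_cases r <;> simp [A, B, mul_apply, Fin.sum_univ_three, one_apply, Q00, Q01, Q02]
  have P20 : d * x + w * h + e * j = d * a⁻¹ʳ * (a * x + t * h + b * j - 1) := by
    rw [ht, hw]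
    linear_combination (norm := noncomm_ring [Ring.mul_inverse_cancel_left d _ hd,
      Ring.inverse_mul_cancel h hh, Ring.inverse_mul_cancel_left a _ ha]) d * hlin1 * h
  have P10 : u * x + c * h + v * j = 0 := by
    simpa [A, B, mul_apply, Fin.sum_univ_three] using
      mul_apply_one_zero_eq_zero hQ₀ hQ₂
        (by simpa [A, B, mul_apply, Fin.sum_univ_three] using P20) (by simpa [A] using ha)
        (by simpa [B] using hk)
  have P11 : u * f + c * y + v * k = 1 := by
    rw [hu, hy, hv]
    noncomm_ring [Ring.mul_inverse_cancel_left c _ hc, Ring.inverse_mul_cancel k hk]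
  have hP₁ : (A * B) 1 = (1 : Matrix (Fin 3) (Fin 3) R) 1 := by
    funext r
    fin_cases r
    · simpa [A, B, mul_apply, Fin.sum_univ_three, one_apply] using P10
    · simpa [A, B, mul_apply, Fin.sum_univ_three, one_apply] using P11
    · exact hP_col₂ 1
  exact mul_eq_one_of_rows 1 (fun r hr => by fin_cases r; exacts [hQ₀, absurd rfl hr, hQ₂]) hP₁
    (by simpa [A] using hc)

end Relations

section Blocks

variable {F : Type*} [Field F] {n : ℕ}

def toBlk3 (M : Matrix (Fin 3) (Fin 3) (Matrix (Fin n) (Fin n) F)) :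
    Matrix (Fin n ⊕ (Fin n ⊕ Fin n)) (Fin n ⊕ (Fin n ⊕ Fin n)) F :=
  blk3 (M 0 0) (M 0 1) (M 0 2) (M 1 0) (M 1 1) (M 1 2) (M 2 0) (M 2 1) (M 2 2)

theorem toBlk3_mul (M N : Matrix (Fin 3) (Fin 3) (Matrix (Fin n) (Fin n) F)) :
    toBlk3 (M * N) = toBlk3 M * toBlk3 N := by
  ext (i | i | i) (j | j | j) <;>
    simp [toBlk3, blk3, mul_apply, Fin.sum_univ_three, Fintype.sum_sum_type, add_assoc]

theorem toBlk3_one : toBlk3 (1 : Matrix (Fin 3) (Fin 3) (Matrix (Fin n) (Fin n) F)) = 1 := by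
  simp [toBlk3, blk3, one_apply]

end Blocks

theorem stmt_17_general {F : Type*} [Field F] {n : ℕ}
    (a b c d e f g h i j k : Matrix (Fin n) (Fin n) F)
    (ha : IsUnit a) (hb : IsUnit b) (hc : IsUnit c) (hd : IsUnit d)
    (hf : IsUnit f) (hh : IsUnit h) (hi : IsUnit i)
    (hk : IsUnit k)
    (t u v w x y z : Matrix (Fin n) (Fin n) F)
    (hquad : z = z * e * z + z * d * g + j * b * z - k * c * i + j * a * g)
    (hlin1 : a⁻¹ * h⁻¹ - a⁻¹ * b * j * h⁻¹ + a⁻¹ * b * z * i⁻¹ =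
      -(d⁻¹ * i⁻¹) - d⁻¹ * e * j * h⁻¹ + d⁻¹ * e * z * i⁻¹)
    (hlin2 : f⁻¹ * a⁻¹ - f⁻¹ * g * d * a⁻¹ + k⁻¹ * z * d * a⁻¹ =
      -(k⁻¹ * b⁻¹) - f⁻¹ * g * e * b⁻¹ + k⁻¹ * z * e * b⁻¹)
    (ht : t = -(a * g * i⁻¹) - b * z * i⁻¹)
    (hu : u = -(k⁻¹ * j * a) - k⁻¹ * z * d)
    (hv : v = k⁻¹ - k⁻¹ * j * b - k⁻¹ * z * e)
    (hw : w = i⁻¹ - d * g * i⁻¹ - e * z * i⁻¹)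
    (hx : x = a⁻¹ + f * k⁻¹ * j - g * d * a⁻¹ + f * k⁻¹ * z * d * a⁻¹)
    (hy : y = c⁻¹ * k⁻¹ * j * a * f + c⁻¹ * k⁻¹ * j * b * k +
      c⁻¹ * k⁻¹ * z * d * f + c⁻¹ * k⁻¹ * z * e * k) :
    blk3 a t b u c v d w e * blk3 x f g h y i j k z = 1 ∧
    blk3 x f g h y i j k z * blk3 a t b u c v d w e = 1 := by
  simp only [Matrix.nonsing_inv_eq_ringInverse] at hlin1 hlin2 ht hu hv hw hx hy
  have hBA : blk3 x f g h y i j k z * blk3 a t b u c v d w e = 1 := by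
    change toBlk3 !![x, f, g; h, y, i; j, k, z] * toBlk3 !![a, t, b; u, c, v; d, w, e] = 1
    rw [← toBlk3_mul, mul_eq_one_of_relations ha hb hc hd hf hh hi hk hquad hlin1 hlin2
      ht hu hv hw hx hy, toBlk3_one]
  exact ⟨mul_eq_one_comm.mpr hBA, hBA⟩

theorem stmt_17 {F : Type*} [Field F] {n : ℕ} (hn : 0 < n)
    (a b c d e f g h i j k : Matrix (Fin n) (Fin n) F)
    (ha : IsUnit a) (hb : IsUnit b) (hc : IsUnit c) (hd : IsUnit d) (he : IsUnit e)
    (hf : IsUnit f) (hg : IsUnit g) (hh : IsUnit h) (hi : IsUnit i) (hj : IsUnit j)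
    (hk : IsUnit k)
    (t u v w x y z : Matrix (Fin n) (Fin n) F)
    (hquad : z = z * e * z + z * d * g + j * b * z - k * c * i + j * a * g)
    (hlin1 : a⁻¹ * h⁻¹ - a⁻¹ * b * j * h⁻¹ + a⁻¹ * b * z * i⁻¹ =
      -(d⁻¹ * i⁻¹) - d⁻¹ * e * j * h⁻¹ + d⁻¹ * e * z * i⁻¹)
    (hlin2 : f⁻¹ * a⁻¹ - f⁻¹ * g * d * a⁻¹ + k⁻¹ * z * d * a⁻¹ =
      -(k⁻¹ * b⁻¹) - f⁻¹ * g * e * b⁻¹ + k⁻¹ * z * e * b⁻¹)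
    (ht : t = -(a * g * i⁻¹) - b * z * i⁻¹)
    (hu : u = -(k⁻¹ * j * a) - k⁻¹ * z * d)
    (hv : v = k⁻¹ - k⁻¹ * j * b - k⁻¹ * z * e)
    (hw : w = i⁻¹ - d * g * i⁻¹ - e * z * i⁻¹)
    (hx : x = a⁻¹ + f * k⁻¹ * j - g * d * a⁻¹ + f * k⁻¹ * z * d * a⁻¹)
    (hy : y = c⁻¹ * k⁻¹ * j * a * f + c⁻¹ * k⁻¹ * j * b * k +
      c⁻¹ * k⁻¹ * z * d * f + c⁻¹ * k⁻¹ * z * e * k) :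
    blk3 a t b u c v d w e * blk3 x f g h y i j k z = 1 ∧
    blk3 x f g h y i j k z * blk3 a t b u c v d w e = 1 :=
  stmt_17_general a b c d e f g h i j k ha hb hc hd hf hh hi hk t u v w x y z hquad hlin1 hlin2 ht
    hu hv hw hx hy
end
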